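/- Let G be a group with a finite symmetric generating set A, and suppose G equipped with its word metric d is Gromov hyperbolic, i.e. there exists δ ≥ 0 such that for all w, x, y, z ∈ G one has (x|y)_w ≥ min((x|z)_w, (y|z)_w) − δ, where (x|y)_w = ½(d(x,w) + d(y,w) − d(x,y)) is the Gromov product. Then G has only finitely many cone types: the set {C(g) : g ∈ G} is finite. -/

import Mathlib

/-! Cannon's argument. Call the function `y ↦ |gy| - |g|` on the ball of radius
`k = ⌈2δ⌉ + 2` the profile of `g`; only finitely many profiles occur, and the profile determines
the cone type. Induct on `|h|`: if `h = h'a` with `|a| = 1`, `h' ∈ C(g) ∩ C(g')` and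
`h ∈ C(g) \ C(g')`, then a geodesic from `1` to `g'h` has length at most `|g'| + |h'|`, and its
point `p` with `|p| ∈ {|g'| - 1, |g'|}` is `(2δ + 2)`-close to `g'` by the four-point condition at
`1, g', p, g'h`. So `y = g'⁻¹p` lies in the ball, equal profiles give `|gy| - |g| = |p| - |g'| ≤ 0`,
and following `gy` by the rest of the geodesic reaches `gh` in at most `|g| + |h'|` steps,
contradicting `h ∈ C(g)`.
-/

/-- Word length of `x` in a group `G` with respect to a generating set `A`. -/
noncomputable def wlOf {G : Type*} [Group G] (A : Set G) (x : G) : ℕ :=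
  sInf {n : ℕ | ∃ w : List G, w.length = n ∧ (∀ l ∈ w, l ∈ A) ∧ w.prod = x}

/-- The word metric `d(x,y) = |x⁻¹y|`. -/
noncomputable def dOf {G : Type*} [Group G] (A : Set G) (x y : G) : ℕ :=
  wlOf A (x⁻¹ * y)

/-- The Gromov product `(x|y)_w = ½(d(x,w) + d(y,w) − d(x,y))`. -/
noncomputable def gromovProd {G : Type*} [Group G] (A : Set G) (w x y : G) : ℝ :=
  ((dOf A x w : ℝ) + (dOf A y w : ℝ) - (dOf A x y : ℝ)) / 2

/-- The cone type of `g`: the set of `h` with `|gh| = |g| + |h|`. -/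
def coneTypeOf {G : Type*} [Group G] (A : Set G) (g : G) : Set G :=
  {h | wlOf A (g * h) = wlOf A g + wlOf A h}

section ConeTypes

variable {G : Type*} [Group G] {A : Set G}

lemma exists_list_prod_eq (hsymm : ∀ a ∈ A, a⁻¹ ∈ A) (hgen : Subgroup.closure A = ⊤) (x : G) :
    ∃ w : List G, (∀ l ∈ w, l ∈ A) ∧ w.prod = x := by
  have hx : x ∈ (Subgroup.closure A).toSubmonoid := by rw [hgen]; trivial
  rw [Subgroup.closure_toSubmonoid] at hx
  obtain ⟨w, hw, rfl⟩ := Submonoid.exists_list_of_mem_closure hx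
  refine ⟨w, fun l hl => ?_, rfl⟩
  rcases hw l hl with h | h
  · exact h
  · simpa using hsymm _ (Set.mem_inv.mp h)

lemma exists_geodesic_word (hsymm : ∀ a ∈ A, a⁻¹ ∈ A) (hgen : Subgroup.closure A = ⊤) (x : G) :
    ∃ w : List G, w.length = wlOf A x ∧ (∀ l ∈ w, l ∈ A) ∧ w.prod = x := by
  obtain ⟨w, hw, hx⟩ := exists_list_prod_eq hsymm hgen x
  exact Nat.sInf_mem (s := {n | ∃ w : List G, w.length = n ∧ (∀ l ∈ w, l ∈ A) ∧ w.prod = x})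
    ⟨w.length, w, rfl, hw, hx⟩

lemma wlOf_list_prod_le {w : List G} (hw : ∀ l ∈ w, l ∈ A) : wlOf A w.prod ≤ w.length :=
  Nat.sInf_le ⟨w, rfl, hw, rfl⟩

@[simp]
lemma wlOf_one : wlOf A (1 : G) = 0 :=
  Nat.le_zero.mp (wlOf_list_prod_le (A := A) (w := []) (by simp))

lemma eq_one_of_wlOf_eq_zero (hsymm : ∀ a ∈ A, a⁻¹ ∈ A) (hgen : Subgroup.closure A = ⊤)
    {x : G} (hx : wlOf A x = 0) : x = 1 := by
  obtain ⟨w, hlen, -, rfl⟩ := exists_geodesic_word hsymm hgen x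
  rw [hx, List.length_eq_zero_iff] at hlen
  simp [hlen]

lemma wlOf_mul_le (hsymm : ∀ a ∈ A, a⁻¹ ∈ A) (hgen : Subgroup.closure A = ⊤) (x y : G) :
    wlOf A (x * y) ≤ wlOf A x + wlOf A y := by
  obtain ⟨u, hu, huA, rfl⟩ := exists_geodesic_word hsymm hgen x
  obtain ⟨v, hv, hvA, rfl⟩ := exists_geodesic_word hsymm hgen y
  have := wlOf_list_prod_le (A := A) (w := u ++ v) (by simp only [List.mem_append]; grind)
  simpa [hu, hv] using this

lemma wlOf_inv (hsymm : ∀ a ∈ A, a⁻¹ ∈ A) (hgen : Subgroup.closure A = ⊤) (x : G) :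
    wlOf A x⁻¹ = wlOf A x := by
  have key (z : G) : wlOf A z⁻¹ ≤ wlOf A z := by
    obtain ⟨w, hlen, hw, rfl⟩ := exists_geodesic_word hsymm hgen z
    rw [← hlen, List.prod_inv_reverse]
    simpa using wlOf_list_prod_le (A := A) (w := (w.map (·⁻¹)).reverse)
      (by simpa using fun l hl => by simpa using hsymm _ (hw _ hl))
  exact (key x).antisymm (by simpa using key x⁻¹)

lemma dOf_comm (hsymm : ∀ a ∈ A, a⁻¹ ∈ A) (hgen : Subgroup.closure A = ⊤) (x y : G) :
    dOf A x y = dOf A y x := by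
  rw [dOf, dOf, ← wlOf_inv hsymm hgen, mul_inv_rev, inv_inv]

@[simp]
lemma dOf_one_left (x : G) : dOf A 1 x = wlOf A x := by
  simp [dOf]

@[simp]
lemma dOf_mul_right_self (x y : G) : dOf A x (x * y) = wlOf A y := by
  simp [dOf]

lemma exists_mul_eq_of_le_wlOf (hsymm : ∀ a ∈ A, a⁻¹ ∈ A) (hgen : Subgroup.closure A = ⊤)
    {x : G} {i : ℕ} (hi : i ≤ wlOf A x) :
    ∃ p s : G, p * s = x ∧ wlOf A p = i ∧ wlOf A s = wlOf A x - i := by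
  obtain ⟨w, hlen, hw, rfl⟩ := exists_geodesic_word hsymm hgen x
  have hp := wlOf_list_prod_le (w := w.take i) fun l hl => hw l (List.mem_of_mem_take hl)
  have hs := wlOf_list_prod_le (w := w.drop i) fun l hl => hw l (List.mem_of_mem_drop hl)
  have hps := wlOf_mul_le hsymm hgen (w.take i).prod (w.drop i).prod
  rw [← List.prod_append, List.take_append_drop] at hps
  simp only [List.length_take, List.length_drop] at hp hs
  exact ⟨(w.take i).prod, (w.drop i).prod, by rw [← List.prod_append, List.take_append_drop],
    by omega, by omega⟩

lemma finite_setOf_wlOf_le (hfin : A.Finite) (hsymm : ∀ a ∈ A, a⁻¹ ∈ A)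
    (hgen : Subgroup.closure A = ⊤) (k : ℕ) : {y : G | wlOf A y ≤ k}.Finite := by
  have := hfin.to_subtype
  refine ((List.finite_length_le A k).image fun w => (w.map Subtype.val).prod).subset ?_
  intro y hy
  obtain ⟨w, hlen, hw, rfl⟩ := exists_geodesic_word hsymm hgen y
  refine ⟨w.pmap Subtype.mk hw, ?_, ?_⟩
  · simpa [hlen] using hy
  · simp [List.map_pmap]

lemma mem_coneTypeOf_of_mul_mem (hsymm : ∀ a ∈ A, a⁻¹ ∈ A) (hgen : Subgroup.closure A = ⊤)
    {g p s : G} (hps : wlOf A (p * s) = wlOf A p + wlOf A s) (h : p * s ∈ coneTypeOf A g) :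
    p ∈ coneTypeOf A g := by
  have h₁ := wlOf_mul_le hsymm hgen g p
  have h₂ := wlOf_mul_le hsymm hgen (g * p) s
  rw [mul_assoc] at h₂
  simp only [coneTypeOf, Set.mem_ofPred_eq] at h ⊢
  omega

def IsHyperbolicWith (A : Set G) (δ : ℝ) : Prop :=
  ∀ w x y z : G, gromovProd A w x y ≥ min (gromovProd A w x z) (gromovProd A w y z) - δ

lemma IsHyperbolicWith.dOf_le {δ : ℝ} (hδ : IsHyperbolicWith A δ)
    (hsymm : ∀ a ∈ A, a⁻¹ ∈ A) (hgen : Subgroup.closure A = ⊤) {w x p z : G}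
    (hx : dOf A w x + dOf A x z ≤ dOf A w z + 2) (hp : dOf A w p + dOf A p z = dOf A w z)
    (hpx : dOf A w p ≤ dOf A w x) (hxp : dOf A w x ≤ dOf A w p + 1) :
    (dOf A x p : ℝ) ≤ 2 * δ + 2 := by
  have h := hδ w x p z
  simp only [gromovProd, dOf_comm hsymm hgen _ w] at h
  have hxz : (dOf A w x : ℝ) - 1 ≤ (dOf A w x + dOf A w z - dOf A x z) / 2 := by
    have : (dOf A w x + dOf A x z : ℝ) ≤ dOf A w z + 2 := by exact_mod_cast hx
    linarith
  have hpz : (dOf A w x : ℝ) - 1 ≤ (dOf A w p + dOf A w z - dOf A p z) / 2 := by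
    have : (dOf A w p + dOf A p z : ℝ) = dOf A w z := by exact_mod_cast hp
    have : (dOf A w x : ℝ) ≤ dOf A w p + 1 := by exact_mod_cast hxp
    linarith
  have : (dOf A w p : ℝ) ≤ dOf A w x := by exact_mod_cast hpx
  linarith [le_min hxz hpz]

lemma IsHyperbolicWith.exists_mul_eq_of_not_mem_coneTypeOf {δ : ℝ} (hδ : IsHyperbolicWith A δ)
    (hsymm : ∀ a ∈ A, a⁻¹ ∈ A) (hgen : Subgroup.closure A = ⊤) {g h a : G}
    (hh : h ∈ coneTypeOf A g) (ha : wlOf A a ≤ 1) (hha : wlOf A (h * a) = wlOf A h + 1)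
    (hnot : h * a ∉ coneTypeOf A g) :
    ∃ p s : G, p * s = g * (h * a) ∧ wlOf A s = wlOf A h ∧ wlOf A p ≤ wlOf A g ∧
      (dOf A g p : ℝ) ≤ 2 * δ + 2 := by
  have hg : g ≠ 1 := by rintro rfl; simp [coneTypeOf] at hnot
  have hg' := mt (eq_one_of_wlOf_eq_zero hsymm hgen) hg
  have hle := wlOf_mul_le hsymm hgen g (h * a)
  have hge := wlOf_mul_le hsymm hgen (g * (h * a)) a⁻¹
  rw [mul_assoc, mul_assoc, mul_inv_cancel, mul_one, wlOf_inv hsymm hgen] at hge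
  simp only [coneTypeOf, Set.mem_ofPred_eq] at hh hnot
  obtain ⟨p, s, hps, hp, hs⟩ :=
    exists_mul_eq_of_le_wlOf hsymm hgen (x := g * (h * a)) (i := wlOf A (g * (h * a)) - wlOf A h)
      (Nat.sub_le _ _)
  refine ⟨p, s, hps, by omega, by omega,
    hδ.dOf_le hsymm hgen (w := 1) (z := g * (h * a)) ?_ ?_ ?_ ?_⟩
  · rw [dOf_one_left, dOf_one_left, dOf_mul_right_self]; omega
  · rw [dOf_one_left, dOf_one_left, ← hps, dOf_mul_right_self, hps]; omega
  all_goals rw [dOf_one_left, dOf_one_left]; omega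

noncomputable def ballProfile (A : Set G) (k : ℕ) (g : G) : {y : G | wlOf A y ≤ k} → ℤ :=
  fun y => wlOf A (g * y) - wlOf A g

lemma finite_range_ballProfile (hfin : A.Finite) (hsymm : ∀ a ∈ A, a⁻¹ ∈ A)
    (hgen : Subgroup.closure A = ⊤) (k : ℕ) : (Set.range (ballProfile A k)).Finite := by
  have := (finite_setOf_wlOf_le hfin hsymm hgen k).to_subtype
  refine (Set.Finite.pi' fun _ => Set.finite_Icc (-k : ℤ) k).subset ?_
  rintro _ ⟨g, rfl⟩ ⟨y, hy : wlOf A y ≤ k⟩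
  have h₁ := wlOf_mul_le hsymm hgen g y
  have h₂ := wlOf_mul_le hsymm hgen (g * y) y⁻¹
  rw [mul_inv_cancel_right, wlOf_inv hsymm hgen] at h₂
  simp only [ballProfile, Set.mem_Icc]
  omega

lemma IsHyperbolicWith.coneTypeOf_subset_of_ballProfile_eq {δ : ℝ}
    (hδ : IsHyperbolicWith A δ)
    (hsymm : ∀ a ∈ A, a⁻¹ ∈ A) (hgen : Subgroup.closure A = ⊤) {k : ℕ} (hk : 2 * δ + 2 ≤ k)
    {g g' : G} (hgg' : ballProfile A k g = ballProfile A k g') :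
    coneTypeOf A g ⊆ coneTypeOf A g' := by
  suffices ∀ n, ∀ h, wlOf A h = n → h ∈ coneTypeOf A g → h ∈ coneTypeOf A g' from
    fun h => this _ h rfl
  intro n
  induction n with
  | zero =>
    intro h hh _
    simp [coneTypeOf, eq_one_of_wlOf_eq_zero hsymm hgen hh]
  | succ m ih =>
    intro h hh hhg
    obtain ⟨h', a, rfl, hh', ha⟩ :=
      exists_mul_eq_of_le_wlOf hsymm hgen (x := h) (i := m) (by omega)
    have hh'g := mem_coneTypeOf_of_mul_mem hsymm hgen (by omega) hhg
    by_contra hnot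
    obtain ⟨p, s, hps, hs, hp, hd⟩ := hδ.exists_mul_eq_of_not_mem_coneTypeOf hsymm hgen
      (ih h' hh' hh'g) (by omega) (by omega) hnot
    have hy : wlOf A (g'⁻¹ * p) ≤ k := by exact_mod_cast hd.trans hk
    have hprof := congrFun hgg' ⟨_, hy⟩
    simp only [ballProfile, mul_inv_cancel_left] at hprof
    have hgh := wlOf_mul_le hsymm hgen (g * (g'⁻¹ * p)) s
    rw [show g * (g'⁻¹ * p) * s = g * (h' * a) by rw [mul_assoc, mul_assoc, hps]; group] at hgh
    simp only [coneTypeOf, Set.mem_ofPred_eq] at hhg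
    omega

lemma IsHyperbolicWith.coneTypeOf_eq_of_ballProfile_eq {δ : ℝ} (hδ : IsHyperbolicWith A δ)
    (hsymm : ∀ a ∈ A, a⁻¹ ∈ A) (hgen : Subgroup.closure A = ⊤) {k : ℕ} (hk : 2 * δ + 2 ≤ k)
    {g g' : G} (hgg' : ballProfile A k g = ballProfile A k g') :
    coneTypeOf A g = coneTypeOf A g' :=
  (hδ.coneTypeOf_subset_of_ballProfile_eq hsymm hgen hk hgg').antisymm
    (hδ.coneTypeOf_subset_of_ballProfile_eq hsymm hgen hk hgg'.symm)

end ConeTypes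

/-- Cannon: a group with a finite symmetric generating set which is
Gromov hyperbolic for the word metric has only finitely many cone types. -/
theorem stmt17 (G : Type*) [Group G] (A : Set G) (hfin : A.Finite)
    (hsymm : ∀ a ∈ A, a⁻¹ ∈ A) (hgen : Subgroup.closure A = ⊤)
    (hyp : ∃ δ : ℝ, 0 ≤ δ ∧ ∀ w x y z : G,
      gromovProd A w x y ≥ min (gromovProd A w x z) (gromovProd A w y z) - δ) :
    {s : Set G | ∃ g : G, s = coneTypeOf A g}.Finite := by
  obtain ⟨δ, -, hδ⟩ := hyp
  have hk : 2 * δ + 2 ≤ (⌈2 * δ⌉₊ + 2 : ℕ) := by push_cast; linarith [Nat.le_ceil (2 * δ)]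
  let Φ := ballProfile A (⌈2 * δ⌉₊ + 2)
  refine ((finite_range_ballProfile hfin hsymm hgen _).image
    (coneTypeOf A ∘ Function.invFun Φ)).subset ?_
  rintro _ ⟨g, rfl⟩
  have hΦ : Φ (Function.invFun Φ (Φ g)) = Φ g := Function.invFun_eq ⟨g, rfl⟩
  exact ⟨Φ g, ⟨g, rfl⟩, IsHyperbolicWith.coneTypeOf_eq_of_ballProfile_eq hδ hsymm hgen hk hΦ⟩
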